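/- arXiv:2001.08545 — 11 statements merged into one kernel-verified Lean document; each statement's English description precedes it below -/
import Mathlib

section
/- For every natural number n and all integers x, y, the identity x^n + y^n = \sum_{i=0}^{\lfloor n/2 \rfloor} (-1)^i (n/(n-i)) \binom{n-i}{i} (xy)^i (x+y)^{n-2i} holds (for n \ge 1). -/
open Finset Polynomial

/-- parity indicator: 1 if odd, 0 if even -/
def pdelta (n : ℕ) : ℕ := n % 2

/-- Ψ(a,b,0)=2, Ψ(a,b,1)=1, Ψ(a,b,n+1)=(2a-b)^{δ(n)}Ψ(a,b,n) - aΨ(a,b,n-1) -/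
def Psi {R : Type*} [CommRing R] (a b : R) : ℕ → R
  | 0 => 2
  | 1 => 1
  | (n+2) => (2*a-b)^(pdelta (n+1)) * Psi a b (n+1) - a * Psi a b n

/-- Φ(a,b,0)=0, Φ(a,b,1)=1, Φ(a,b,n+1)=(2a-b)^{δ(n+1)}Φ(a,b,n) - aΦ(a,b,n-1) -/
def Phi {R : Type*} [CommRing R] (a b : R) : ℕ → R
  | 0 => 0
  | 1 => 1
  | (n+2) => (2*a-b)^(pdelta (n+2)) * Phi a b (n+1) - a * Phi a b n

/-- closed-form coefficient -/
def Dc (n i : ℕ) : ℕ := if i = 0 then 1 else (n-i).choose i + (n-i-1).choose (i-1)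

lemma coeff_eq (n i : ℕ) (hn : 1 ≤ n) (hi : i ≤ n/2) :
    (n * (n-i).choose i) / (n-i) = Dc n i := by
  match i with
  | 0 => simp [Dc, Nat.div_self hn]
  | (k+1) =>
    have h2 : 2*(k+1) ≤ n := by omega
    have hk : n - k - 2 + 1 = n - k - 1 := by omega
    have key : (n-k-1) * Nat.choose (n-k-2) k = Nat.choose (n-k-1) (k+1) * (k+1) := by
      rw [← hk]; exact Nat.add_one_mul_choose_eq (n-k-2) k
    have hnum : n * (n-(k+1)).choose (k+1) = (n-(k+1)) * Dc n (k+1) := by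
      have hsplit : n = (n-k-1) + (k+1) := by omega
      simp only [Dc, if_neg (Nat.succ_ne_zero k)]
      calc n * (n-(k+1)).choose (k+1)
          = (n-k-1) * (n-k-1).choose (k+1) + (n-k-1).choose (k+1) * (k+1) := by
            rw [show n-(k+1) = n-k-1 from by omega]
            nth_rewrite 1 [hsplit]; ring
        _ = (n-k-1) * (n-k-1).choose (k+1) + (n-k-1) * Nat.choose (n-k-2) k := by rw [key]
        _ = (n-(k+1)) * ((n-(k+1)).choose (k+1) + (n-(k+1)-1).choose (k+1-1)) := by
            rw [show n-(k+1) = n-k-1 from by omega, show n-k-1-1 = n-k-2 from by omega,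
              show k+1-1 = k from rfl]; ring
    rw [hnum, Nat.mul_div_cancel_left _ (by omega : 0 < n - (k+1))]

lemma Dc_rec (n i : ℕ) (hi : i ≤ n/2) :
    Dc (n+2) (i+1) = Dc (n+1) (i+1) + Dc n i := by
  match i with
  | 0 =>
    simp only [Dc, if_neg (Nat.succ_ne_zero 0), if_pos rfl]
    simp [Nat.choose_one_right]
  | (k+1) =>
    have h2 : 2*(k+1) ≤ n := by omega
    simp only [Dc, if_neg (Nat.succ_ne_zero _), Nat.add_sub_cancel]
    rw [show n+2-(k+1+1)-1 = (n-k-2)+1 by omega,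
        show n+2-(k+1+1) = (n-k-1)+1 by omega,
        show n+1-(k+1+1)-1 = n-k-2 by omega,
        show n+1-(k+1+1) = n-k-1 by omega,
        show n-(k+1)-1 = n-k-2 by omega,
        show n-(k+1) = (n-k-2)+1 by omega,
        Nat.choose_succ_succ (n-k-1) (k+1), Nat.choose_succ_succ (n-k-2) k]
    simp only [Nat.succ_eq_add_one, show k+1+1 = k+2 from rfl]
    rw [show (n-k-1).choose (k+1) = (n-k-2).choose k + (n-k-2).choose (k+1) from by
      rw [show n-k-1 = (n-k-2)+1 by omega]; exact Nat.choose_succ_succ _ _]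
    ring

lemma Dc_zero (n i : ℕ) (h1 : 2 ≤ i) (h2 : n < 2*i) : Dc n i = 0 := by
  simp only [Dc, if_neg (by omega : i ≠ 0)]
  rw [Nat.choose_eq_zero_of_lt (by omega), Nat.choose_eq_zero_of_lt (by omega)]

def T (x y : ℤ) (n : ℕ) : ℤ :=
  ∑ i ∈ Finset.range (n/2+1), (-1:ℤ)^i * (Dc n i : ℤ) * (x*y)^i * (x+y)^(n-2*i)

lemma T_rec (x y : ℤ) (n : ℕ) (hn : 1 ≤ n) :
    T x y (n+2) = (x+y) * T x y (n+1) - x*y * T x y n := by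
  have h1 : (x+y) * T x y (n+1)
      = ∑ i ∈ Finset.range (n/2+2),
          (-1:ℤ)^i * (Dc (n+1) i : ℤ) * (x*y)^i * (x+y)^(n+2-2*i) := by
    rw [T, Finset.mul_sum]
    have step1 : ∑ i ∈ Finset.range ((n+1)/2+1),
        (x+y) * ((-1:ℤ)^i * (Dc (n+1) i : ℤ) * (x*y)^i * (x+y)^(n+1-2*i))
        = ∑ i ∈ Finset.range ((n+1)/2+1),
            (-1:ℤ)^i * (Dc (n+1) i : ℤ) * (x*y)^i * (x+y)^(n+2-2*i) := by
      refine Finset.sum_congr rfl fun i hi => ?_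
      simp only [Finset.mem_range] at hi
      rw [show n+2-2*i = (n+1-2*i)+1 by omega, pow_succ]; ring
    rw [step1]
    refine Finset.sum_subset (fun i hi => ?_) (fun i hi hni => ?_)
    · simp only [Finset.mem_range] at *; omega
    · simp only [Finset.mem_range] at hi hni
      rw [Dc_zero (n+1) i (by omega) (by omega)]
      push_cast; ring
  have h2 : x*y * T x y n
      = ∑ i ∈ Finset.range (n/2+1),
          (-1:ℤ)^i * (Dc n i : ℤ) * (x*y)^(i+1) * (x+y)^(n-2*i) := by
    rw [T, Finset.mul_sum]
    refine Finset.sum_congr rfl fun i hi => ?_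
    rw [pow_succ]; ring
  rw [h1, h2, T, show (n+2)/2+1 = n/2+2 by omega,
    Finset.sum_range_succ' _ (n/2+1), Finset.sum_range_succ' (f := fun i =>
      (-1:ℤ)^i * (Dc (n+1) i : ℤ) * (x*y)^i * (x+y)^(n+2-2*i)) (n/2+1)]
  have hAB : ∀ k ∈ Finset.range (n/2+1),
      (-1:ℤ)^(k+1) * (Dc (n+2) (k+1) : ℤ) * (x*y)^(k+1) * (x+y)^(n+2-2*(k+1))
      = ((-1:ℤ)^(k+1) * (Dc (n+1) (k+1) : ℤ) * (x*y)^(k+1) * (x+y)^(n+2-2*(k+1))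
        - (-1:ℤ)^k * (Dc n k : ℤ) * (x*y)^(k+1) * (x+y)^(n-2*k)) := by
    intro k hk
    simp only [Finset.mem_range] at hk
    rw [show n+2-2*(k+1) = n-2*k by omega, Dc_rec n k (by omega)]
    push_cast; ring
  rw [Finset.sum_congr rfl hAB, Finset.sum_sub_distrib,
    show Dc (n+2) 0 = 1 from rfl, show Dc (n+1) 0 = 1 from rfl]
  push_cast
  ring

lemma main_aux (x y : ℤ) : ∀ n, 1 ≤ n → x^n + y^n = T x y n := by
  intro n
  induction n using Nat.strong_induction_on with
  | _ n ih =>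
    match n with
    | 0 => intro h; omega
    | 1 => intro _; simp [T, Dc]
    | 2 =>
      intro _
      simp only [T, show 2/2+1 = 2 from rfl, Finset.sum_range_succ, Finset.sum_range_zero, Dc]
      norm_num; ring
    | (m+3) =>
      intro _
      have h1 := ih (m+1) (by omega) (by omega)
      have h2 := ih (m+2) (by omega) (by omega)
      have h3 := T_rec x y (m+1) (by omega)
      rw [show m+3 = (m+1)+2 from rfl, h3, ← h1, ← h2]; ring

theorem stmt0 (n : ℕ) (hn : 1 ≤ n) (x y : ℤ) :
    x ^ n + y ^ n =
      ∑ i ∈ Finset.range (n / 2 + 1),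
        (-1 : ℤ) ^ i * ((n * (n - i).choose i / (n - i) : ℕ) : ℤ) * (x * y) ^ i *
          (x + y) ^ (n - 2 * i) := by
  have : ∑ i ∈ Finset.range (n / 2 + 1),
        (-1 : ℤ) ^ i * ((n * (n - i).choose i / (n - i) : ℕ) : ℤ) * (x * y) ^ i *
          (x + y) ^ (n - 2 * i) = T x y n := by
    refine Finset.sum_congr rfl fun i hi => ?_
    simp only [Finset.mem_range] at hi
    rw [coeff_eq n i hn (by omega)]
  rw [this]
  exact main_aux x y n hn
end

section
/- For every natural number n \ge 1 and all integers x, y, the identity (x^n - y^n)/(x - y) = \sum_{i=0}^{\lfloor (n-1)/2 \rfloor} (-1)^i \binom{n-i-1}{i} (xy)^i (x+y)^{n-2i-1} holds; equivalently, x^n - y^n = (x-y) \cdot \sum_{i=0}^{\lfloor (n-1)/2 \rfloor} (-1)^i \binom{n-i-1}{i} (xy)^i (x+y)^{n-2i-1}. -/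
open Finset Polynomial

/-- generic term of the sum -/
def gterm (x y : ℤ) (n i : ℕ) : ℤ :=
  (-1) ^ i * ((n - i).choose i : ℤ) * (x * y) ^ i * (x + y) ^ (n - 2 * i)

lemma gterm_zero (x y : ℤ) {n i : ℕ} (h : n < 2 * i) : gterm x y n i = 0 := by
  have : n - i < i := by omega
  simp [gterm, Nat.choose_eq_zero_of_lt this]

lemma gterm_rec (x y : ℤ) (m i : ℕ) :
    gterm x y (m + 2) (i + 1) = (x + y) * gterm x y (m + 1) (i + 1) - (x * y) * gterm x y m i := by
  unfold gterm
  rcases lt_trichotomy (2 * i) m with h | h | h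
  · obtain ⟨k, rfl⟩ : ∃ k, m = 2 * i + (k + 1) := ⟨m - 2 * i - 1, by omega⟩
    rw [show 2 * i + (k + 1) + 2 - 2 * (i + 1) = k + 1 from by omega,
        show 2 * i + (k + 1) + 1 - 2 * (i + 1) = k from by omega,
        show 2 * i + (k + 1) - 2 * i = k + 1 from by omega,
        show 2 * i + (k + 1) + 2 - (i + 1) = (i + k + 1) + 1 from by omega,
        show 2 * i + (k + 1) + 1 - (i + 1) = i + k + 1 from by omega,
        show 2 * i + (k + 1) - i = i + k + 1 from by omega,
        Nat.choose_succ_succ]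
    push_cast
    ring
  · subst h
    rw [show 2 * i + 2 - 2 * (i + 1) = 0 from by omega,
        show 2 * i + 1 - 2 * (i + 1) = 0 from by omega,
        show 2 * i - 2 * i = 0 from by omega,
        show 2 * i + 2 - (i + 1) = i + 1 from by omega,
        show 2 * i + 1 - (i + 1) = i from by omega,
        show 2 * i - i = i from by omega,
        Nat.choose_self, Nat.choose_eq_zero_of_lt (Nat.lt_succ_self i), Nat.choose_self]
    push_cast
    ring
  · have h1 : (m + 2 - (i + 1)).choose (i + 1) = 0 :=
      Nat.choose_eq_zero_of_lt (by omega)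
    have h2 : (m + 1 - (i + 1)).choose (i + 1) = 0 :=
      Nat.choose_eq_zero_of_lt (by omega)
    have h3 : (m - i).choose i = 0 :=
      Nat.choose_eq_zero_of_lt (by omega)
    rw [h1, h2, h3]
    push_cast
    ring

/-- the full sum -/
def Vsum (x y : ℤ) (n : ℕ) : ℤ := ∑ i ∈ Finset.range (n + 1), gterm x y n i

lemma Vsum_rec (x y : ℤ) (m : ℕ) :
    Vsum x y (m + 2) = (x + y) * Vsum x y (m + 1) - (x * y) * Vsum x y m := by
  have e1 : Vsum x y (m + 2)
      = gterm x y (m + 2) 0 + ∑ i ∈ Finset.range (m + 2), gterm x y (m + 2) (i + 1) := by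
    rw [Vsum, Finset.sum_range_succ']
    ring
  rw [e1]
  have e2 : ∑ i ∈ Finset.range (m + 2), gterm x y (m + 2) (i + 1)
      = (x + y) * (∑ i ∈ Finset.range (m + 2), gterm x y (m + 1) (i + 1))
        - (x * y) * (∑ i ∈ Finset.range (m + 2), gterm x y m i) := by
    rw [Finset.mul_sum, Finset.mul_sum, ← Finset.sum_sub_distrib]
    exact Finset.sum_congr rfl fun i _ => gterm_rec x y m i
  rw [e2]
  have e3 : ∑ i ∈ Finset.range (m + 2), gterm x y (m + 1) (i + 1)
      = Vsum x y (m + 1) - gterm x y (m + 1) 0 := by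
    have := Finset.sum_range_succ' (gterm x y (m + 1)) (m + 2)
    have hz : gterm x y (m + 1) (m + 2) = 0 := gterm_zero x y (by omega)
    rw [Finset.sum_range_succ, hz, add_zero] at this
    rw [Vsum, this]
    ring
  have e4 : ∑ i ∈ Finset.range (m + 2), gterm x y m i = Vsum x y m := by
    rw [Finset.sum_range_succ, gterm_zero x y (show m < 2 * (m + 1) from by omega), add_zero, Vsum]
  rw [e3, e4]
  have h0 : gterm x y (m + 2) 0 = (x + y) ^ (m + 2) := by simp [gterm]
  have h0' : gterm x y (m + 1) 0 = (x + y) ^ (m + 1) := by simp [gterm]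
  rw [h0, h0']
  ring

lemma key (x y : ℤ) : ∀ m : ℕ, x ^ (m + 1) - y ^ (m + 1) = (x - y) * Vsum x y m
  | 0 => by simp [Vsum, gterm]
  | 1 => by
      rw [Vsum]
      rw [Finset.sum_range_succ, Finset.sum_range_one]
      simp [gterm]
      ring
  | (m + 2) => by
      have h1 := key x y m
      have h2 := key x y (m + 1)
      rw [Vsum_rec]
      linear_combination (x + y) * h2 - x * y * h1

theorem stmt1 (n : ℕ) (hn : 1 ≤ n) (x y : ℤ) :
    x ^ n - y ^ n =
      (x - y) *
        ∑ i ∈ Finset.range ((n - 1) / 2 + 1),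
          (-1 : ℤ) ^ i * ((n - i - 1).choose i : ℤ) * (x * y) ^ i *
            (x + y) ^ (n - 2 * i - 1) := by
  obtain ⟨m, rfl⟩ : ∃ m, n = m + 1 := ⟨n - 1, by omega⟩
  have hsum : ∑ i ∈ Finset.range ((m + 1 - 1) / 2 + 1),
        (-1 : ℤ) ^ i * ((m + 1 - i - 1).choose i : ℤ) * (x * y) ^ i *
          (x + y) ^ (m + 1 - 2 * i - 1)
      = Vsum x y m := by
    have step1 : ∑ i ∈ Finset.range ((m + 1 - 1) / 2 + 1),
          (-1 : ℤ) ^ i * ((m + 1 - i - 1).choose i : ℤ) * (x * y) ^ i *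
            (x + y) ^ (m + 1 - 2 * i - 1)
        = ∑ i ∈ Finset.range (m / 2 + 1), gterm x y m i := by
      rw [show m + 1 - 1 = m from by omega]
      refine Finset.sum_congr rfl fun i _ => ?_
      rw [gterm, show m + 1 - i - 1 = m - i from by omega,
          show m + 1 - 2 * i - 1 = m - 2 * i from by omega]
    rw [step1, Vsum]
    refine Finset.sum_subset ?_ ?_
    · intro i hi
      simp only [Finset.mem_range] at *
      omega
    · intro i _ hi
      simp only [Finset.mem_range] at hi
      exact gterm_zero x y (by omega)
  rw [hsum]
  exact key x y m
end

section
/- Define \delta(n) = 1 if n is odd and 0 if n is even. Let \Phi(a,b,n) be defined by \Phi(a,b,0)=0, \Phi(a,b,1)=1, and \Phi(a,b,n+1) = (2a-b)^{\delta(n+1)} \Phi(a,b,n) - a \Phi(a,b,n-1). Then for all a, b and all n \ge 1, \Phi(a,b,n) = \sum_{i=0}^{\lfloor (n-1)/2 \rfloor} \binom{n-i-1}{i} (-a)^i (2a-b)^{\lfloor (n-1)/2 \rfloor - i}. -/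
open Finset Polynomial

private lemma L1 {R : Type*} [CommRing R] (x y : R) (k : ℕ) :
    ∑ i ∈ Finset.range (k+2), ((2*k+2-i).choose i : R) * y^i * x^(k+1-i)
    = x * ∑ i ∈ Finset.range (k+1), ((2*k+1-i).choose i : R) * y^i * x^(k-i)
      + y * ∑ i ∈ Finset.range (k+1), ((2*k-i).choose i : R) * y^i * x^(k-i) := by
  rw [Finset.sum_range_succ' _ (k+1), Finset.mul_sum, Finset.mul_sum,
    Finset.sum_range_succ' (fun i => x * (((2*k+1-i).choose i : R) * y^i * x^(k-i))) k]
  have h1 : ∀ i ∈ Finset.range (k+1),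
      ((2*k+2-(i+1)).choose (i+1) : R) * y^(i+1) * x^(k+1-(i+1))
      = x * (((2*k+1-(i+1)).choose (i+1) : R) * y^(i+1) * x^(k-(i+1)))
        + y * (((2*k-i).choose i : R) * y^i * x^(k-i)) := by
    intro i hi
    simp only [Finset.mem_range] at hi
    have e1 : 2*k+2-(i+1) = (2*k-i)+1 := by omega
    have e2 : 2*k+1-(i+1) = 2*k-i := by omega
    have e5 : k+1-(i+1) = k-i := by omega
    rw [e1, e2, e5, Nat.choose_succ_succ]
    simp only [Nat.succ_eq_add_one]
    push_cast
    rcases Nat.lt_or_ge i k with h | h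
    · have e4 : k - i = (k-(i+1))+1 := by omega
      rw [e4]
      ring
    · have hc : (2*k-i).choose (i+1) = 0 := Nat.choose_eq_zero_of_lt (by omega)
      have e4 : k - i = 0 := by omega
      rw [hc, e4]
      push_cast
      ring
  rw [Finset.sum_congr rfl h1, Finset.sum_add_distrib,
    Finset.sum_range_succ (fun i => x * (((2*k+1-(i+1)).choose (i+1) : R) * y^(i+1) * x^(k-(i+1)))) k]
  have hz : x * (((2*k+1-(k+1)).choose (k+1) : R) * y^(k+1) * x^(k-(k+1))) = 0 := by
    have : (2*k+1-(k+1)).choose (k+1) = 0 := Nat.choose_eq_zero_of_lt (by omega)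
    rw [this]; push_cast; ring
  rw [hz]
  simp only [Nat.sub_zero, Nat.choose_zero_right, pow_zero]
  push_cast
  ring

private lemma L2 {R : Type*} [CommRing R] (x y : R) (k : ℕ) :
    ∑ i ∈ Finset.range (k+2), ((2*k+3-i).choose i : R) * y^i * x^(k+1-i)
    = ∑ i ∈ Finset.range (k+2), ((2*k+2-i).choose i : R) * y^i * x^(k+1-i)
      + y * ∑ i ∈ Finset.range (k+1), ((2*k+1-i).choose i : R) * y^i * x^(k-i) := by
  rw [Finset.sum_range_succ' _ (k+1),
    Finset.sum_range_succ' (fun i => ((2*k+2-i).choose i : R) * y^i * x^(k+1-i)) (k+1),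
    Finset.mul_sum]
  have h1 : ∀ i ∈ Finset.range (k+1),
      ((2*k+3-(i+1)).choose (i+1) : R) * y^(i+1) * x^(k+1-(i+1))
      = ((2*k+2-(i+1)).choose (i+1) : R) * y^(i+1) * x^(k+1-(i+1))
        + y * (((2*k+1-i).choose i : R) * y^i * x^(k-i)) := by
    intro i hi
    simp only [Finset.mem_range] at hi
    have e1 : 2*k+3-(i+1) = (2*k+1-i)+1 := by omega
    have e2 : 2*k+2-(i+1) = 2*k+1-i := by omega
    have e3 : k+1-(i+1) = k-i := by omega
    rw [e1, e2, e3, Nat.choose_succ_succ]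
    simp only [Nat.succ_eq_add_one]
    push_cast
    ring
  rw [Finset.sum_congr rfl h1, Finset.sum_add_distrib]
  simp only [Nat.sub_zero, Nat.choose_zero_right, pow_zero]
  push_cast
  ring

private lemma key_s3 {R : Type*} [CommRing R] (a b : R) (k : ℕ) :
    Phi a b (2*k+1) = ∑ i ∈ Finset.range (k+1), ((2*k-i).choose i : R) * (-a)^i * (2*a-b)^(k-i)
    ∧ Phi a b (2*k+2) = ∑ i ∈ Finset.range (k+1), ((2*k+1-i).choose i : R) * (-a)^i * (2*a-b)^(k-i) := by
  induction k with
  | zero => simp [Phi, pdelta, show Phi a b 2 = (2*a-b)^(pdelta 2) * Phi a b 1 - a * Phi a b 0 from rfl]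
  | succ k ih =>
    obtain ⟨ih1, ih2⟩ := ih
    have p1 : pdelta (2*k+3) = 1 := by simp [pdelta]
    have p2 : pdelta (2*k+4) = 0 := by simp [pdelta]
    have r1 : Phi a b (2*k+3) = (2*a-b)^(pdelta (2*k+3)) * Phi a b (2*k+2) - a * Phi a b (2*k+1) := rfl
    have r2 : Phi a b (2*k+4) = (2*a-b)^(pdelta (2*k+4)) * Phi a b (2*k+3) - a * Phi a b (2*k+2) := rfl
    have h1 : Phi a b (2*k+3)
        = ∑ i ∈ Finset.range (k+2), ((2*k+2-i).choose i : R) * (-a)^i * (2*a-b)^(k+1-i) := by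
      rw [r1, p1, pow_one, ih1, ih2, L1 (2*a-b) (-a) k]
      ring
    constructor
    · have e : 2*(k+1)+1 = 2*k+3 := by ring
      rw [e, h1]
      refine Finset.sum_congr (by norm_num) fun i hi => ?_
      have : 2*(k+1)-i = 2*k+2-i := by omega
      rw [this]
    · have e : 2*(k+1)+2 = 2*k+4 := by ring
      have hs : ∑ i ∈ Finset.range (k+1+1), ((2*(k+1)+1-i).choose i : R) * (-a)^i * (2*a-b)^(k+1-i)
          = ∑ i ∈ Finset.range (k+2), ((2*k+3-i).choose i : R) * (-a)^i * (2*a-b)^(k+1-i) := by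
        refine Finset.sum_congr (by norm_num) fun i hi => ?_
        have : 2*(k+1)+1-i = 2*k+3-i := by omega
        rw [this]
      rw [e, r2, p2, pow_zero, one_mul, h1, ih2, hs, L2 (2*a-b) (-a) k]
      ring

theorem stmt3 {R : Type*} [CommRing R] (a b : R) (n : ℕ) (hn : 1 ≤ n) :
    Phi a b n =
      ∑ i ∈ Finset.range ((n - 1) / 2 + 1),
        ((n - i - 1).choose i : R) * (-a) ^ i * (2 * a - b) ^ ((n - 1) / 2 - i) := by
  rcases Nat.even_or_odd n with ⟨k, hk⟩ | ⟨k, hk⟩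
  · obtain ⟨-, h⟩ := key_s3 a b (k-1)
    have hk' : n = 2*(k-1)+2 := by omega
    rw [hk', h]
    have e : (2*(k-1)+2-1)/2 = k-1 := by omega
    rw [e]
    refine Finset.sum_congr rfl fun i hi => ?_
    have : 2*(k-1)+2-i-1 = 2*(k-1)+1-i := by omega
    rw [this]
  · obtain ⟨h, -⟩ := key_s3 a b k
    have hk' : n = 2*k+1 := by omega
    rw [hk', h]
    have e : (2*k+1-1)/2 = k := by omega
    rw [e]
    refine Finset.sum_congr rfl fun i hi => ?_
    have : 2*k+1-i-1 = 2*k-i := by omega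
    rw [this]
end

section
/- With \Psi defined by \Psi(a,b,0)=2, \Psi(a,b,1)=1, \Psi(a,b,n+1) = (2a-b)^{\delta(n)} \Psi(a,b,n) - a \Psi(a,b,n-1) (where \delta(n)=1 for n odd, 0 for n even), the following holds for all integers x, y and all n: \Psi(xy, -x^2-y^2, n) \cdot (x+y)^{\delta(n)} = x^n + y^n. -/
open Finset Polynomial

theorem stmt4 (x y : ℤ) (n : ℕ) :
    Psi (x * y) (-x ^ 2 - y ^ 2) n * (x + y) ^ pdelta n = x ^ n + y ^ n := by
  induction n using Nat.twoStepInduction with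
  | zero => simp [Psi, pdelta]
  | one => simp [Psi, pdelta]
  | more n ih1 ih2 =>
    rcases Nat.even_or_odd n with he | ho
    · have h0 : pdelta n = 0 := Nat.even_iff.mp he
      have h1 : pdelta (n + 1) = 1 := Nat.odd_iff.mp (Even.add_one he)
      have h2 : pdelta (n + 2) = 0 := by simp [pdelta] at h0 ⊢; omega
      rw [h0, pow_zero, mul_one] at ih1
      rw [h1, pow_one] at ih2
      rw [Psi, h1, h2, pow_zero, pow_one, mul_one]
      linear_combination (x + y) * ih2 - x * y * ih1
    · have h0 : pdelta n = 1 := Nat.odd_iff.mp ho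
      have h1 : pdelta (n + 1) = 0 := Nat.even_iff.mp (Odd.add_one ho)
      have h2 : pdelta (n + 2) = 1 := by simp [pdelta] at h0 ⊢; omega
      rw [h0, pow_one] at ih1
      rw [h1, pow_zero, mul_one] at ih2
      rw [Psi, h1, h2, pow_zero, pow_one, one_mul]
      linear_combination (x + y) * ih2 - x * y * ih1
end

section
/- With \Phi defined by \Phi(a,b,0)=0, \Phi(a,b,1)=1, \Phi(a,b,n+1) = (2a-b)^{\delta(n+1)} \Phi(a,b,n) - a \Phi(a,b,n-1) (where \delta(n)=1 for n odd, 0 for n even), the following holds for all integers x, y and all n: \Phi(xy, -x^2-y^2, n) \cdot (x-y) \cdot (x+y)^{\delta(n-1)} = x^n - y^n. -/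
open Finset Polynomial

lemma stmt5_aux (x y : ℤ) (n : ℕ) :
    Phi (x * y) (-x ^ 2 - y ^ 2) (n + 1) * (x - y) * (x + y) ^ pdelta n =
      x ^ (n + 1) - y ^ (n + 1) := by
  induction n using Nat.twoStepInduction with
  | zero => simp [Phi, pdelta]
  | one => simp [Phi, pdelta]; ring
  | more n ih1 ih2 =>
    have h2ab : 2 * (x * y) - (-x ^ 2 - y ^ 2) = (x + y) ^ 2 := by ring
    rcases Nat.even_or_odd n with he | ho
    · have hn : pdelta n = 0 := by have := Nat.even_iff.mp he; unfold pdelta; omega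
      have hn1 : pdelta (n + 1) = 1 := by unfold pdelta at hn ⊢; omega
      have hn2 : pdelta (n + 2) = 0 := by unfold pdelta at hn ⊢; omega
      have hn3 : pdelta (n + 3) = 1 := by unfold pdelta at hn ⊢; omega
      rw [hn] at ih1; rw [hn1] at ih2
      show ((2 * (x*y) - (-x^2-y^2))^(pdelta (n+3)) * Phi (x*y) (-x^2-y^2) (n+2)
        - (x*y) * Phi (x*y) (-x^2-y^2) (n+1)) * (x - y) * (x + y) ^ pdelta (n+2) = _
      rw [hn2, hn3, h2ab, pow_one, pow_zero]
      linear_combination (x + y) * ih2 - x * y * ih1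
    · have hn : pdelta n = 1 := by have := Nat.odd_iff.mp ho; unfold pdelta; omega
      have hn1 : pdelta (n + 1) = 0 := by unfold pdelta at hn ⊢; omega
      have hn2 : pdelta (n + 2) = 1 := by unfold pdelta at hn ⊢; omega
      have hn3 : pdelta (n + 3) = 0 := by unfold pdelta at hn ⊢; omega
      rw [hn] at ih1; rw [hn1] at ih2
      show ((2 * (x*y) - (-x^2-y^2))^(pdelta (n+3)) * Phi (x*y) (-x^2-y^2) (n+2)
        - (x*y) * Phi (x*y) (-x^2-y^2) (n+1)) * (x - y) * (x + y) ^ pdelta (n+2) = _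
      rw [hn2, hn3, h2ab, pow_one, pow_zero]
      linear_combination (x + y) * ih2 - x * y * ih1

theorem stmt5 (x y : ℤ) (n : ℕ) :
    Phi (x * y) (-x ^ 2 - y ^ 2) n * (x - y) * (x + y) ^ pdelta (n - 1) =
      x ^ n - y ^ n := by
  cases n with
  | zero => simp [Phi]
  | succ m => simpa using stmt5_aux x y m
end

section
/- Let \Phi be defined by the recurrence \Phi(a,b,0)=0, \Phi(a,b,1)=1, \Phi(a,b,n+1)=(2a-b)^{\delta(n+1)}\Phi(a,b,n) - a\Phi(a,b,n-1). Then for all n \ge 1, 3^{\delta(n-1)} \cdot \Phi(2,-5,n) = 2^n - 1, where \delta(m)=1 for m odd and 0 for m even. -/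
open Finset Polynomial

lemma phi_aux : ∀ n : ℕ, 3 ^ pdelta n * Phi (2:ℤ) (-5) (n+1) = 2^(n+1) - 1 ∧
    3 ^ pdelta (n+1) * Phi (2:ℤ) (-5) (n+2) = 2^(n+2) - 1 := by
  intro n
  induction n with
  | zero => norm_num [Phi, pdelta]
  | succ n ih =>
    obtain ⟨h1, h2⟩ := ih
    refine ⟨h2, ?_⟩
    show 3 ^ pdelta (n+2) * ((2*2-(-5))^(pdelta (n+3)) * Phi (2:ℤ) (-5) (n+2) - 2 * Phi (2:ℤ) (-5) (n+1)) = 2^(n+3) - 1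
    have hp2 : pdelta (n+2) = pdelta n := by simp [pdelta, Nat.add_mod]
    have hp3 : pdelta (n+3) = pdelta (n+1) := by simp [pdelta, Nat.add_mod]
    rw [hp2, hp3]
    rcases Nat.even_or_odd n with he | ho
    · have h0 : pdelta n = 0 := by simp [pdelta, Nat.even_iff.mp he]
      have h1' : pdelta (n+1) = 1 := by simp [pdelta, Nat.even_iff.mp he, Nat.add_mod]
      rw [h0, pow_zero, one_mul] at h1 ⊢
      rw [h1', pow_one] at h2 ⊢
      have e2 : (2:ℤ)^(n+3) = 2*2^(n+2) := by ring
      have e1 : (2:ℤ)^(n+2) = 2*2^(n+1) := by ring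
      linarith [h1, h2, e1, e2]
    · have h0 : pdelta n = 1 := by simp [pdelta, Nat.odd_iff.mp ho]
      have h1' : pdelta (n+1) = 0 := by simp [pdelta, Nat.odd_iff.mp ho, Nat.add_mod]
      rw [h0, pow_one] at h1 ⊢
      rw [h1', pow_zero, one_mul] at h2 ⊢
      have e2 : (2:ℤ)^(n+3) = 2*2^(n+2) := by ring
      have e1 : (2:ℤ)^(n+2) = 2*2^(n+1) := by ring
      linarith [h1, h2, e1, e2]

theorem stmt11 (n : ℕ) (hn : 1 ≤ n) :
    3 ^ pdelta (n - 1) * Phi (2 : ℤ) (-5) n = 2 ^ n - 1 := by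
  obtain ⟨m, rfl⟩ := Nat.exists_eq_add_of_le' hn
  simpa using (phi_aux m).1
end

section
/- Let \Psi be defined by the recurrence \Psi(a,b,0)=2, \Psi(a,b,1)=1, \Psi(a,b,n+1)=(2a-b)^{\delta(n)}\Psi(a,b,n) - a\Psi(a,b,n-1), over the polynomial ring \mathbb{Z}[x]. Let T_n(x) denote the Chebyshev polynomial of the first kind. Then for all n, 2^{\delta(n+1)} T_n(x) = x^{\delta(n)} \Psi(1, 2-4x^2, n). -/
open Finset Polynomial

lemma pdelta_add_two (n : ℕ) : pdelta (n + 2) = pdelta n := by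
  simp [pdelta, Nat.add_mod]

theorem stmt12 (n : ℕ) :
    2 ^ pdelta (n + 1) * Polynomial.Chebyshev.T ℤ n =
      X ^ pdelta n * Psi (1 : ℤ[X]) (2 - 4 * X ^ 2) n := by
  induction n using Nat.twoStepInduction with
  | zero => simp [pdelta, Psi]
  | one => simp [pdelta, Psi]
  | more n ih1 ih2 =>
    have hT : Polynomial.Chebyshev.T ℤ (n + 2 : ℕ) =
        2 * X * Polynomial.Chebyshev.T ℤ (n + 1 : ℕ) - Polynomial.Chebyshev.T ℤ n := by
      push_cast
      exact Polynomial.Chebyshev.T_add_two ℤ n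
    rw [show (n : ℕ) + 2 + 1 = (n + 1) + 2 from rfl, pdelta_add_two, pdelta_add_two, hT]
    show _ = _ * Psi _ _ (n + 2)
    rw [Psi]
    rcases Nat.even_or_odd n with h | h
    · have h0 : pdelta n = 0 := Nat.even_iff.mp h
      have h1 : pdelta (n + 1) = 1 := Nat.odd_iff.mp (Even.add_one h)
      have h2 : pdelta (n + 1 + 1) = 0 := by
        rw [show n + 1 + 1 = n + 2 from rfl, pdelta_add_two, h0]
      rw [h0, h1] at ih1
      rw [h1, h2] at ih2
      rw [h0, h1]
      linear_combination (4 * X : ℤ[X]) * ih2 - ih1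
    · have h0 : pdelta n = 1 := Nat.odd_iff.mp h
      have h1 : pdelta (n + 1) = 0 := Nat.even_iff.mp (Odd.add_one h)
      have h2 : pdelta (n + 1 + 1) = 1 := by
        rw [show n + 1 + 1 = n + 2 from rfl, pdelta_add_two, h0]
      rw [h0, h1] at ih1
      rw [h1, h2] at ih2
      rw [h0, h1]
      linear_combination (X : ℤ[X]) * ih2 - ih1
end

section
/- Let \Phi be defined by the recurrence \Phi(a,b,0)=0, \Phi(a,b,1)=1, \Phi(a,b,n+1)=(2a-b)^{\delta(n+1)}\Phi(a,b,n) - a\Phi(a,b,n-1), over the polynomial ring \mathbb{Z}[x]. Let U_n(x) denote the Chebyshev polynomial of the second kind. Then for all n, U_n(x) = (2x)^{\delta(n)} \Phi(1, 2-4x^2, n+1). -/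
open Finset Polynomial

theorem stmt13 (n : ℕ) :
    Polynomial.Chebyshev.U ℤ n =
      (2 * X) ^ pdelta n * Phi (1 : ℤ[X]) (2 - 4 * X ^ 2) (n + 1) := by
  induction n using Nat.twoStepInduction with
  | zero => simp [Phi, pdelta]
  | one =>
    show Polynomial.Chebyshev.U ℤ ((1:ℕ) : ℤ) = _
    norm_num [Phi, pdelta, Polynomial.Chebyshev.U_one]
  | more n ih1 ih2 =>
    have hc : ((n:ℤ)+2) = ((n+2 : ℕ) : ℤ) := by push_cast; ring
    have hU := Polynomial.Chebyshev.U_add_two ℤ n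
    have hc1 : ((n:ℤ)+1) = ((n+1 : ℕ) : ℤ) := by push_cast; ring
    rw [hc, hc1] at hU
    have key : (2*(1:ℤ[X]) - (2 - 4*X^2)) = (2*X)^2 := by ring
    have hΦ : Phi (1 : ℤ[X]) (2 - 4 * X ^ 2) (n + 3)
        = (2*X)^(2 * pdelta (n+3)) * Phi (1:ℤ[X]) (2-4*X^2) (n+2)
          - Phi (1:ℤ[X]) (2-4*X^2) (n+1) := by
      show Phi (1 : ℤ[X]) (2 - 4 * X ^ 2) (n+1+2) = _
      rw [Phi, key, ← pow_mul]
      ring_nf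
    rw [hU, ih1, ih2]
    show _ = (2*X)^pdelta (n+2) * Phi (1:ℤ[X]) (2-4*X^2) (n+3)
    rw [hΦ]
    rcases Nat.even_or_odd n with h | h
    · have h0 : pdelta n = 0 := Nat.even_iff.mp h
      have h1 : pdelta (n+1) = 1 := by unfold pdelta at *; omega
      have h2 : pdelta (n+2) = 0 := by unfold pdelta at *; omega
      have h3 : pdelta (n+3) = 1 := by unfold pdelta at *; omega
      rw [h0, h1, h2, h3]; ring
    · have h0 : pdelta n = 1 := Nat.odd_iff.mp h
      have h1 : pdelta (n+1) = 0 := by unfold pdelta at *; omega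
      have h2 : pdelta (n+2) = 1 := by unfold pdelta at *; omega
      have h3 : pdelta (n+3) = 0 := by unfold pdelta at *; omega
      rw [h0, h1, h2, h3]; ring
end

section
/- Let \Phi be defined by the recurrence \Phi(a,b,0)=0, \Phi(a,b,1)=1, \Phi(a,b,n+1)=(2a-b)^{\delta(n+1)}\Phi(a,b,n) - a\Phi(a,b,n-1) over \mathbb{Z}[x,\alpha]. Let E_n(x,\alpha) = \sum_{i=0}^{\lfloor n/2 \rfloor} \binom{n-i}{i} (-\alpha)^i x^{n-2i} be the Dickson polynomial of the second kind. Then E_n(x,\alpha) = x^{\delta(n)} \Phi(\alpha, 2\alpha - x^2, n+1). -/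
open Finset Polynomial

noncomputable def S {R : Type*} [CommRing R] (x α : R) (n : ℕ) : R :=
  ∑ i ∈ Finset.range (n / 2 + 1), ((n - i).choose i : R) * (-α) ^ i * x ^ (n - 2 * i)

lemma S_rec {R : Type*} [CommRing R] (x α : R) (n : ℕ) :
    S x α (n+2) = x * S x α (n+1) - α * S x α n := by
  have hB : x * S x α (n+1) = x^(n+2)
      + ∑ i ∈ Finset.range (n/2+1), ((n-i).choose (i+1) : R) * (-α)^(i+1) * x^(n-2*i) := by
    rw [S, Finset.mul_sum, Finset.sum_range_succ']
    have h0 : x * (((n+1-0).choose 0 : R) * (-α)^0 * x^(n+1-2*0)) = x^(n+2) := by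
      simp [pow_succ, mul_comm]
    rw [h0]
    have hmain : ∑ i ∈ Finset.range ((n+1)/2),
        x * (((n+1-(i+1)).choose (i+1) : R) * (-α)^(i+1) * x^(n+1-2*(i+1)))
        = ∑ i ∈ Finset.range ((n+1)/2), ((n-i).choose (i+1) : R) * (-α)^(i+1) * x^(n-2*i) := by
      refine Finset.sum_congr rfl fun i hi => ?_
      rw [Finset.mem_range] at hi
      have h1 : n+1-(i+1) = n-i := by omega
      have h2 : n+1-2*(i+1)+1 = n-2*i := by omega
      rw [h1, ← h2, pow_succ]
      ring
    rw [hmain]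
    rcases Nat.even_or_odd n with ⟨k,hk⟩ | ⟨k,hk⟩
    · subst hk
      have hr : (k+k)/2+1 = (k+k+1)/2 + 1 := by omega
      rw [hr, Finset.sum_range_succ]
      have hz : (k+k - (k+k+1)/2).choose ((k+k+1)/2 + 1) = 0 := by
        apply Nat.choose_eq_zero_of_lt; omega
      rw [hz]
      push_cast
      ring
    · subst hk
      have hr : (2*k+1+1)/2 = (2*k+1)/2+1 := by omega
      have hr2 : (2*k+1)/2+1 = (2*k+1+1)/2 := by omega
      rw [hr2]; ring
  have key : S x α (n+2) = x * S x α (n+1)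
      + ∑ i ∈ Finset.range (n/2+1), ((n-i).choose i : R) * (-α)^(i+1) * x^(n-2*i) := by
    rw [hB, S]
    have hr : (n+2)/2+1 = n/2+1+1 := by omega
    rw [hr, Finset.sum_range_succ']
    have h0 : ((n+2-0).choose 0 : R) * (-α)^0 * x^(n+2-2*0) = x^(n+2) := by simp
    rw [h0]
    have hmain : ∑ i ∈ Finset.range (n/2+1),
        ((n+2-(i+1)).choose (i+1) : R) * (-α)^(i+1) * x^(n+2-2*(i+1))
        = ∑ i ∈ Finset.range (n/2+1),
          (((n-i).choose (i+1) : R) * (-α)^(i+1) * x^(n-2*i)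
            + ((n-i).choose i : R) * (-α)^(i+1) * x^(n-2*i)) := by
      refine Finset.sum_congr rfl fun i hi => ?_
      rw [Finset.mem_range] at hi
      have h1 : n+2-(i+1) = (n-i)+1 := by omega
      have h2 : n+2-2*(i+1) = n-2*i := by omega
      rw [h1, h2, Nat.choose_succ_succ]
      push_cast
      ring
    rw [hmain, Finset.sum_add_distrib]
    ring
  have hlast : ∑ i ∈ Finset.range (n/2+1), ((n-i).choose i : R) * (-α)^(i+1) * x^(n-2*i)
      = - (α * S x α n) := by
    rw [S, Finset.mul_sum, ← Finset.sum_neg_distrib]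
    refine Finset.sum_congr rfl fun i hi => ?_
    ring
  rw [key, hlast]
  ring

lemma Phi_rec {R : Type*} [CommRing R] (x α : R) (n : ℕ) :
    x ^ pdelta (n+2) * Phi α (2*α - x^2) (n+3)
      = x * (x ^ pdelta (n+1) * Phi α (2*α - x^2) (n+2))
        - α * (x ^ pdelta n * Phi α (2*α - x^2) (n+1)) := by
  have hb : 2*α - (2*α - x^2) = x^2 := by ring
  show x ^ pdelta (n+2) * ((2*α - (2*α - x^2))^(pdelta (n+3)) * Phi α (2*α-x^2) (n+2)
      - α * Phi α (2*α-x^2) (n+1)) = _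
  rw [hb]
  rcases Nat.even_or_odd n with ⟨k,hk⟩ | ⟨k,hk⟩ <;> subst hk
  · have p1 : pdelta (k+k+2) = 0 := by unfold pdelta; omega
    have p2 : pdelta (k+k+3) = 1 := by unfold pdelta; omega
    have p3 : pdelta (k+k+1) = 1 := by unfold pdelta; omega
    have p4 : pdelta (k+k) = 0 := by unfold pdelta; omega
    rw [p1, p2, p3, p4]; ring
  · have p1 : pdelta (2*k+1+2) = 1 := by unfold pdelta; omega
    have p2 : pdelta (2*k+1+3) = 0 := by unfold pdelta; omega
    have p3 : pdelta (2*k+1+1) = 0 := by unfold pdelta; omega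
    have p4 : pdelta (2*k+1) = 1 := by unfold pdelta; omega
    rw [p1, p2, p3, p4]; ring

theorem stmt15 {R : Type*} [CommRing R] (x α : R) (n : ℕ) :
    ∑ i ∈ Finset.range (n / 2 + 1),
        ((n - i).choose i : R) * (-α) ^ i * x ^ (n - 2 * i) =
      x ^ pdelta n * Phi α (2 * α - x ^ 2) (n + 1) := by
  have main : ∀ m : ℕ, S x α m = x ^ pdelta m * Phi α (2*α - x^2) (m+1) := by
    intro m
    induction m using Nat.twoStepInduction with
    | zero => simp [S, pdelta, Phi]
    | one =>
        have : Phi α (2*α-x^2) 2 = (2*α - (2*α-x^2))^(pdelta 2) * Phi α (2*α-x^2) 1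
            - α * Phi α (2*α-x^2) 0 := rfl
        rw [S]
        simp [this, pdelta, Phi]
    | more k ih1 ih2 =>
        rw [S_rec, ih1, ih2, Phi_rec]
  exact main n
end

section
/- Let \Psi be defined by the recurrence \Psi(a,b,0)=2, \Psi(a,b,1)=1, \Psi(a,b,n+1)=(2a-b)^{\delta(n)}\Psi(a,b,n) - a\Psi(a,b,n-1). Then for any scalar \lambda and any n, \lambda^{\lfloor n/2 \rfloor} \Psi(a,b,n) = \Psi(\lambda a, \lambda b, n), where \Psi is regarded as a polynomial function of a and b over a commutative ring. -/
open Finset Polynomial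

theorem stmt16 {R : Type*} [CommRing R] (a b lam : R) (n : ℕ) :
    lam ^ (n / 2) * Psi a b n = Psi (lam * a) (lam * b) n := by
  induction n using Nat.twoStepInduction with
  | zero => simp [Psi]
  | one => simp [Psi]
  | more n ih1 ih2 =>
    simp only [Psi, pdelta]
    rcases Nat.even_or_odd n with ⟨k, hk⟩ | ⟨k, hk⟩
    · subst hk
      have e1 : (k + k + 2) / 2 = (k + k) / 2 + 1 := by omega
      have e2 : (k + k + 1) / 2 = (k + k) / 2 := by omega
      have m1 : (k + k + 1) % 2 = 1 := by omega
      rw [e1, m1, ← ih1, ← ih2, e2]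
      ring
    · subst hk
      have e1 : (2 * k + 1 + 2) / 2 = (2 * k + 1 + 1) / 2 := by omega
      have e2 : (2 * k + 1 + 1) / 2 = (2 * k + 1) / 2 + 1 := by omega
      have m1 : (2 * k + 1 + 1) % 2 = 0 := by omega
      rw [e1, m1, ← ih1, ← ih2, e2]
      ring
end

section
/- For all real (or complex) numbers a, b with b \ne 2a and b \ne -2a, and all natural numbers n, the sequence \Psi defined by \Psi(0)=2, \Psi(1)=1, \Psi(n+1)=(2a-b)^{\delta(n)}\Psi(n) - a\Psi(n-1) satisfies the closed form \Psi(n) = (2a-b)^{\lfloor n/2 \rfloor} (x_0^n + y_0^n), where x_0 = (1 + s)/2, y_0 = (1 - s)/2 and s is a square root of (b+2a)/(b-2a). -/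
open Finset Polynomial

theorem stmt19 (a b s : ℂ) (h1 : b ≠ 2 * a) (h2 : b ≠ -(2 * a))
    (hs : s ^ 2 = (b + 2 * a) / (b - 2 * a)) (n : ℕ) :
    Psi a b n =
      (2 * a - b) ^ (n / 2) * (((1 + s) / 2) ^ n + ((1 - s) / 2) ^ n) := by
  have hb : b - 2*a ≠ 0 := sub_ne_zero.mpr h1
  rw [eq_div_iff hb] at hs
  have hxy : (2*a - b) * (((1+s)/2) * ((1-s)/2)) = a := by linear_combination hs/4
  suffices H : ∀ n : ℕ, (Psi a b n =
      (2 * a - b) ^ (n / 2) * (((1 + s) / 2) ^ n + ((1 - s) / 2) ^ n)) ∧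
      (Psi a b (n+1) =
      (2 * a - b) ^ ((n+1) / 2) * (((1 + s) / 2) ^ (n+1) + ((1 - s) / 2) ^ (n+1))) from
    (H n).1
  intro n
  induction n with
  | zero =>
    constructor
    · show (2:ℂ) = _; norm_num
    · show (1:ℂ) = _; norm_num; ring
  | succ n ih =>
    refine ⟨ih.2, ?_⟩
    have hrec : Psi a b (n+2) = (2*a-b)^(pdelta (n+1)) * Psi a b (n+1) - a * Psi a b n := by
      rw [Psi]
    rw [hrec, ih.1, ih.2]
    rcases Nat.even_or_odd n with ⟨m, rfl⟩ | ⟨m, rfl⟩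
    · have hp : pdelta (m + m + 1) = 1 := by simp [pdelta]; omega
      have e0 : (m + m) / 2 = m := by omega
      have e1 : (m + m + 1) / 2 = m := by omega
      have e2 : (m + m + 1 + 1) / 2 = m + 1 := by omega
      rw [hp, e0, e1, e2]
      have p1 : ((1+s)/2 : ℂ) ^ (m + m + 1) = ((1+s)/2) ^ (m+m) * ((1+s)/2) := pow_succ _ _
      have p2 : ((1-s)/2 : ℂ) ^ (m + m + 1) = ((1-s)/2) ^ (m+m) * ((1-s)/2) := pow_succ _ _
      have p3 : ((1+s)/2 : ℂ) ^ (m + m + 1 + 1) = ((1+s)/2) ^ (m+m) * ((1+s)/2) * ((1+s)/2) := by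
        rw [pow_succ, p1]
      have p4 : ((1-s)/2 : ℂ) ^ (m + m + 1 + 1) = ((1-s)/2) ^ (m+m) * ((1-s)/2) * ((1-s)/2) := by
        rw [pow_succ, p2]
      rw [p1, p2, p3, p4, pow_succ]
      linear_combination (2*a-b)^m * (((1+s)/2)^(m+m) + ((1-s)/2)^(m+m)) * hxy
    · have hp : pdelta (2*m + 1 + 1) = 0 := by simp [pdelta]; omega
      have e0 : (2*m + 1) / 2 = m := by omega
      have e1 : (2*m + 1 + 1) / 2 = m + 1 := by omega
      have e2 : (2*m + 1 + 1 + 1) / 2 = m + 1 := by omega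
      rw [hp, e0, e1, e2]
      have p1 : ((1+s)/2 : ℂ) ^ (2*m + 1 + 1) = ((1+s)/2) ^ (2*m+1) * ((1+s)/2) := pow_succ _ _
      have p2 : ((1-s)/2 : ℂ) ^ (2*m + 1 + 1) = ((1-s)/2) ^ (2*m+1) * ((1-s)/2) := pow_succ _ _
      have p3 : ((1+s)/2 : ℂ) ^ (2*m + 1 + 1 + 1) = ((1+s)/2) ^ (2*m+1) * ((1+s)/2) * ((1+s)/2) := by
        rw [pow_succ, p1]
      have p4 : ((1-s)/2 : ℂ) ^ (2*m + 1 + 1 + 1) = ((1-s)/2) ^ (2*m+1) * ((1-s)/2) * ((1-s)/2) := by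
        rw [pow_succ, p2]
      rw [p1, p2, p3, p4, pow_succ, pow_zero]
      linear_combination (2*a-b)^m * (((1+s)/2)^(2*m+1) + ((1-s)/2)^(2*m+1)) * hxy
end
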